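/- If S ∈ GL_m(F) and T ∈ GL_n(F) are Perron similarities with m > 1 and n > 1, then the containment 𝒞(S) ⊗ 𝒞(T) ⊆ 𝒞(S ⊗ T) is strict: there exists z ∈ 𝒞(S ⊗ T) that is not of the form x ⊗ y with x ∈ 𝒞(S) and y ∈ 𝒞(T). -/

import Mathlib

/-- The Kronecker product of vectors. -/
def vecKron {F : Type*} [Mul F] {m n : ℕ} (x : Fin m → F) (y : Fin n → F) :
    Fin (m * n) → F :=
  fun i => x i.divNat * y i.modNat

/-- The Kronecker product of matrices. -/
def matKron {F : Type*} [Mul F] {m n p q : ℕ}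
    (S : Matrix (Fin m) (Fin n) F) (T : Matrix (Fin p) (Fin q) F) :
    Matrix (Fin (m * p)) (Fin (n * q)) F :=
  fun i j => S i.divNat j.divNat * T i.modNat j.modNat

/-- An entry of a matrix over `F = ℝ` or `ℂ` is nonnegative:
it is a nonnegative real number. -/
def entryNonneg {F : Type*} [RCLike F] (z : F) : Prop :=
  ∃ r : ℝ, 0 ≤ r ∧ z = (r : F)

/-- The Perron spectracone `𝒞(S) = {x : S D_x S⁻¹ ≥ 0 entrywise}`. -/
def spectracone {F : Type*} [RCLike F] {n : ℕ} (S : Matrix (Fin n) (Fin n) F) :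
    Set (Fin n → F) :=
  {x | ∀ i j, entryNonneg ((S * Matrix.diagonal x * S⁻¹) i j)}

/-- An invertible matrix is a Perron similarity if one of its columns and the
corresponding row of its inverse are both nonnegative or both nonpositive. -/
def IsPerronSimilarity {F : Type*} [RCLike F] {n : ℕ}
    (S : Matrix (Fin n) (Fin n) F) : Prop :=
  IsUnit S.det ∧ ∃ i,
    ((∀ r, entryNonneg (S r i)) ∧ (∀ c, entryNonneg (S⁻¹ i c))) ∨
    ((∀ r, entryNonneg (-(S r i))) ∧ (∀ c, entryNonneg (-(S⁻¹ i c))))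

/-!
Take Perron indices `k` of `S` and `l` of `T` and put `z = 𝟙 + e_(k,l)`. Then
`(S ⊗ T) D_z (S ⊗ T)⁻¹ = I + ((S ⊗ T) e_(k,l)) (e_(k,l)ᵀ (S ⊗ T)⁻¹)`, and every entry of the
rank-one term is a product `(S r k S⁻¹ k c) (T r' l T⁻¹ l c')` of two nonnegative numbers, so
`z ∈ 𝒞(S ⊗ T)`. But `z` is not of the form `x ⊗ y` at all: for `k' ≠ k`, `l' ≠ l` a Kronecker
product satisfies `z_(k,l) z_(k',l') = z_(k,l') z_(k',l)`, whereas here the two sides are `2` and `1`.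
-/

open Matrix
open scoped ComplexOrder Kronecker

section Kronecker

variable {R : Type*}

@[simp]
theorem finProdFinEquiv_divNat {m n : ℕ} (p : Fin m × Fin n) :
    (finProdFinEquiv p).divNat = p.1 :=
  congrArg Prod.fst (finProdFinEquiv.symm_apply_apply p)

@[simp]
theorem finProdFinEquiv_modNat {m n : ℕ} (p : Fin m × Fin n) :
    (finProdFinEquiv p).modNat = p.2 :=
  congrArg Prod.snd (finProdFinEquiv.symm_apply_apply p)

theorem vecKron_comp_finProdFinEquiv [Mul R] {m n : ℕ} (x : Fin m → R) (y : Fin n → R) :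
    vecKron x y ∘ finProdFinEquiv = fun p => x p.1 * y p.2 := by
  ext p
  simp [vecKron]

theorem matKron_eq_reindex_kronecker [Mul R] {m n p q : ℕ}
    (A : Matrix (Fin m) (Fin n) R) (B : Matrix (Fin p) (Fin q) R) :
    matKron A B = reindex finProdFinEquiv finProdFinEquiv (A ⊗ₖ B) :=
  rfl

variable [CommRing R] {m n : ℕ}

theorem inv_matKron (A : Matrix (Fin m) (Fin m) R) (B : Matrix (Fin n) (Fin n) R) :
    (matKron A B)⁻¹ = matKron A⁻¹ B⁻¹ := by
  rw [matKron_eq_reindex_kronecker, inv_reindex, inv_kronecker, matKron_eq_reindex_kronecker]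

theorem isUnit_det_matKron {A : Matrix (Fin m) (Fin m) R} {B : Matrix (Fin n) (Fin n) R}
    (hA : IsUnit A.det) (hB : IsUnit B.det) : IsUnit (matKron A B).det := by
  rw [matKron_eq_reindex_kronecker, det_reindex_self, det_kronecker]
  exact (hA.pow _).mul (hB.pow _)

theorem matKron_col_mul_row (A : Matrix (Fin m) (Fin m) R) (B : Matrix (Fin n) (Fin n) R)
    (i j : Fin (m * n)) (p : Fin m × Fin n) :
    matKron A B i (finProdFinEquiv p) * (matKron A B)⁻¹ (finProdFinEquiv p) j =
      (A i.divNat p.1 * A⁻¹ p.1 j.divNat) * (B i.modNat p.2 * B⁻¹ p.2 j.modNat) := by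
  rw [inv_matKron]
  simp only [matKron, finProdFinEquiv_divNat, finProdFinEquiv_modNat]
  ring

end Kronecker

theorem mul_diagonal_one_add_single_mul_apply {R ι : Type*} [CommRing R] [Fintype ι]
    [DecidableEq ι] (M N : Matrix ι ι R) (k i j : ι) :
    (M * diagonal (1 + Pi.single k 1) * N : Matrix ι ι R) i j = (M * N) i j + M i k * N k j := by
  have hD : diagonal (1 + Pi.single k 1 : ι → R) = 1 + single k k 1 := by
    rw [← diagonal_single, ← diagonal_one, diagonal_add]
    rfl
  rw [hD, mul_add, mul_one, add_mul, Matrix.add_apply]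
  simp [mul_apply, single_apply, ite_and]

theorem mul_ne_one_add_single {α β R : Type*} [DecidableEq α] [DecidableEq β]
    [Nontrivial α] [Nontrivial β] [CommRing R] [Nontrivial R]
    (x : α → R) (y : β → R) (p : α × β) :
    (fun q : α × β => x q.1 * y q.2) ≠ 1 + Pi.single p 1 := by
  intro h
  obtain ⟨a, ha⟩ := exists_ne p.1
  obtain ⟨b, hb⟩ := exists_ne p.2
  have hval (q : α × β) : x q.1 * y q.2 = (1 + Pi.single p 1 : α × β → R) q := congrFun h q
  have h11 := hval p
  have h12 := hval (p.1, b)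
  have h21 := hval (a, p.2)
  have h22 := hval (a, b)
  simp only [Pi.add_apply, Pi.one_apply, Pi.single_eq_same, ne_eq, Prod.ext_iff, ha, hb,
    and_false, and_true, and_self, not_false_eq_true, Pi.single_eq_of_ne, add_zero] at h11 h12 h21 h22
  have : (1 + 1 : R) = 1 := by
    calc (1 + 1 : R) = (x p.1 * y p.2) * (x a * y b) := by rw [h11, h22]; ring
      _ = (x p.1 * y b) * (x a * y p.2) := by ring
      _ = 1 := by rw [h12, h21, one_mul]
  simp at this

section Spectracone

variable {F : Type*} [RCLike F] {n : ℕ}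

theorem entryNonneg_iff_nonneg {z : F} : entryNonneg z ↔ 0 ≤ z := by
  rw [RCLike.nonneg_iff_exists_ofReal]
  exact ⟨fun ⟨r, hr, h⟩ => ⟨r, hr, h.symm⟩, fun ⟨r, hr, h⟩ => ⟨r, hr, h.symm⟩⟩

theorem mem_spectracone_iff {S : Matrix (Fin n) (Fin n) F} {x : Fin n → F} :
    x ∈ spectracone S ↔ ∀ i j, 0 ≤ (S * diagonal x * S⁻¹) i j := by
  simp only [spectracone, Set.mem_ofPred_eq, entryNonneg_iff_nonneg]

theorem IsPerronSimilarity.exists_col_mul_row_nonneg {S : Matrix (Fin n) (Fin n) F}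
    (hS : IsPerronSimilarity S) : ∃ k, ∀ i j, 0 ≤ S i k * S⁻¹ k j := by
  obtain ⟨-, k, ⟨hcol, hrow⟩ | ⟨hcol, hrow⟩⟩ := hS
  · exact ⟨k, fun i j => mul_nonneg (entryNonneg_iff_nonneg.1 (hcol i))
      (entryNonneg_iff_nonneg.1 (hrow j))⟩
  · refine ⟨k, fun i j => ?_⟩
    rw [← neg_mul_neg]
    exact mul_nonneg (entryNonneg_iff_nonneg.1 (hcol i)) (entryNonneg_iff_nonneg.1 (hrow j))

theorem one_add_single_mem_spectracone {M : Matrix (Fin n) (Fin n) F} (hM : IsUnit M.det)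
    {k : Fin n} (hk : ∀ i j, 0 ≤ M i k * M⁻¹ k j) : 1 + Pi.single k 1 ∈ spectracone M := by
  rw [mem_spectracone_iff]
  intro i j
  rw [mul_diagonal_one_add_single_mul_apply, mul_nonsing_inv M hM]
  exact add_nonneg (by rw [one_apply]; split_ifs <;> simp) (hk i j)

end Spectracone

/-- If `S` and `T` are Perron similarities with `m, n > 1`, then the containment
`𝒞(S) ⊗ 𝒞(T) ⊆ 𝒞(S ⊗ T)` is strict. -/
theorem spectracone_kron_ssubset {F : Type*} [RCLike F] {m n : ℕ}
    (hm : 1 < m) (hn : 1 < n)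
    (S : Matrix (Fin m) (Fin m) F) (T : Matrix (Fin n) (Fin n) F)
    (hS : IsPerronSimilarity S) (hT : IsPerronSimilarity T) :
    ∃ z ∈ spectracone (matKron S T),
      ¬∃ x ∈ spectracone S, ∃ y ∈ spectracone T, z = vecKron x y := by
  obtain ⟨k, hk⟩ := hS.exists_col_mul_row_nonneg
  obtain ⟨l, hl⟩ := hT.exists_col_mul_row_nonneg
  refine ⟨1 + Pi.single (finProdFinEquiv (k, l)) 1,
    one_add_single_mem_spectracone (isUnit_det_matKron hS.1 hT.1) fun i j => ?_, ?_⟩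
  · rw [matKron_col_mul_row]
    exact mul_nonneg (hk _ _) (hl _ _)
  · rintro ⟨x, -, y, -, hxy⟩
    have : Nontrivial (Fin m) := Fin.nontrivial_iff_two_le.2 hm
    have : Nontrivial (Fin n) := Fin.nontrivial_iff_two_le.2 hn
    apply mul_ne_one_add_single x y (k, l)
    rw [← vecKron_comp_finProdFinEquiv, ← hxy]
    ext q
    simp [Pi.single_apply, finProdFinEquiv.injective.eq_iff]
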